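/- arXiv:2311.17291 — 2 statements merged into one kernel-verified Lean document; each statement's English description precedes it below -/
import Mathlib

section
/- Let u be a strictly convex continuous function on B₂(0) ⊆ ℝⁿ. Define for p ∈ B₁(0) the outer section S^u_r(p) = { x ∈ B₁(0) : u(x) < u(p) + sup_{y ∈ ∂u(p)} (x−p)·y + r² }, where ∂u(p) is the subdifferential. Then lim_{r→0} sup_{|p|<1} diam S^u_r(p) = 0; that is, for every ε > 0 there is r₀ > 0 such that for all 0 < r < r₀ and all p ∈ B₁(0), any x ∈ S^u_r(p) satisfies |x − p| < ε. -/
/-!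
Fix `ε > 0`. A subgradient `y ∈ ∂u(p)` tested at the midpoint `m` of `p` and `x` gives
`(x - p)·y ≤ 2 (u(m) - u(p))`, so every `x ∈ S^u_r(p)` satisfies `u(p) + u(x) - 2 u(m) < r²`.
By strict convexity and continuity, this midpoint gap is bounded below by some `δ > 0` on the
compact set of pairs in `B̄₁(0)` at distance `≥ ε`; hence `r₀ = √δ` works.
-/

open Metric Set

/-- The subdifferential of `u` at `p`, with respect to the domain `B₂(0)`. -/
def subdiff {n : ℕ} (u : EuclideanSpace ℝ (Fin n) → ℝ) (p : EuclideanSpace ℝ (Fin n)) :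
    Set (EuclideanSpace ℝ (Fin n)) :=
  {y | ∀ x ∈ ball (0 : EuclideanSpace ℝ (Fin n)) 2, u p + (inner ℝ (x - p) y : ℝ) ≤ u x}

/-- The outer section `S^u_r(p)` defined via the subdifferential. -/
def outerSection {n : ℕ} (u : EuclideanSpace ℝ (Fin n) → ℝ) (r : ℝ)
    (p : EuclideanSpace ℝ (Fin n)) : Set (EuclideanSpace ℝ (Fin n)) :=
  {x ∈ ball (0 : EuclideanSpace ℝ (Fin n)) 1 |
    u x < u p + sSup ((fun y => (inner ℝ (x - p) y : ℝ)) '' subdiff u p) + r ^ 2}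

section Subgradient

variable {E : Type*} [NormedAddCommGroup E] [NormedSpace ℝ E] {s : Set E} {f : E → ℝ} {p : E}

lemma ConvexOn.exists_subgradient (hs : IsOpen s) (hf : ConvexOn ℝ s f)
    (hc : ContinuousOn f s) (hp : p ∈ s) :
    ∃ g : E →L[ℝ] ℝ, ∀ x ∈ s, f p + g (x - p) ≤ f x := by
  set epi : Set (E × ℝ) := {q | q.1 ∈ s ∧ f q.1 < q.2}
  have hepi_open : IsOpen epi := by
    have hcont : ContinuousOn (fun q : E × ℝ => f q.1 - q.2) (s ×ˢ univ) :=
      (hc.comp continuousOn_fst fun _ hq => hq.1).sub continuousOn_snd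
    convert hcont.isOpen_inter_preimage (hs.prod isOpen_univ) isOpen_Iio (t := Iio 0) using 1
    ext q
    simp [epi]
  obtain ⟨φ, hφ⟩ := geometric_hahn_banach_open_point hf.convex_strict_epigraph hepi_open
    (fun h : (p, f p) ∈ epi => lt_irrefl _ h.2)
  set c := φ (0, 1)
  have hφ_apply (x : E) (t : ℝ) : φ (x, t) = φ (x, 0) + t * c := by
    rw [← smul_eq_mul, ← map_smul, ← map_add]
    simp
  have hc_neg : c < 0 := by
    have := hφ (p, f p + 1) ⟨hp, by linarith⟩
    rw [hφ_apply p (f p + 1), hφ_apply p (f p)] at this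
    linarith
  -- `(x, f x)` lies on the boundary of the strict epigraph, so it is weakly separated
  -- from `(p, f p)`.
  have hsep : ∀ x ∈ s, φ (x, 0) + f x * c ≤ φ (p, 0) + f p * c := by
    intro x hx
    refine le_of_forall_pos_lt_add fun η hη => ?_
    have := hφ (x, f x + η / -c) ⟨hx, by linarith [div_pos hη (neg_pos.2 hc_neg)]⟩
    have hη_c : η / -c * c = -η := by field_simp [hc_neg.ne]
    rw [hφ_apply x, hφ_apply p, add_mul, hη_c] at this
    linarith
  refine ⟨(-c)⁻¹ • φ.comp (ContinuousLinearMap.inl ℝ E ℝ), fun x hx => ?_⟩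
  have hφ_sub : φ (x - p, 0) = φ (x, 0) - φ (p, 0) := by
    rw [← map_sub, Prod.mk_sub_mk, sub_zero]
  have : (-c)⁻¹ * φ (x - p, 0) ≤ f x - f p := by
    rw [inv_mul_le_iff₀ (neg_pos.2 hc_neg)]
    linarith [hsep x hx]
  simp only [smul_apply, ContinuousLinearMap.comp_apply, ContinuousLinearMap.inl_apply,
    smul_eq_mul]
  linarith

end Subgradient

section Subdifferential

variable {n : ℕ} {u : EuclideanSpace ℝ (Fin n) → ℝ}

lemma subdiff_nonempty (hu : ConvexOn ℝ (ball 0 2) u) (hc : ContinuousOn u (ball 0 2))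
    {p : EuclideanSpace ℝ (Fin n)} (hp : p ∈ ball (0 : EuclideanSpace ℝ (Fin n)) 2) :
    (subdiff u p).Nonempty := by
  obtain ⟨g, hg⟩ := hu.exists_subgradient isOpen_ball hc hp
  refine ⟨(InnerProductSpace.toDual ℝ _).symm g, fun x hx => ?_⟩
  rw [real_inner_comm, InnerProductSpace.toDual_symm_apply]
  exact hg x hx

lemma sSup_inner_subdiff_le_midpoint (hu : ConvexOn ℝ (ball 0 2) u)
    (hc : ContinuousOn u (ball 0 2)) {p x : EuclideanSpace ℝ (Fin n)}
    (hp : p ∈ ball (0 : EuclideanSpace ℝ (Fin n)) 2)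
    (hx : x ∈ ball (0 : EuclideanSpace ℝ (Fin n)) 2) :
    sSup ((fun y => (inner ℝ (x - p) y : ℝ)) '' subdiff u p)
      ≤ 2 * (u (midpoint ℝ p x) - u p) := by
  refine csSup_le ((subdiff_nonempty hu hc hp).image _) ?_
  rintro _ ⟨y, hy, rfl⟩
  have := hy _ ((convex_ball 0 2).midpoint_mem hp hx)
  rw [midpoint_sub_left, real_inner_smul_left, invOf_eq_inv] at this
  linarith

end Subdifferential

lemma StrictConvexOn.exists_pos_le_midpoint_gap {E : Type*} [NormedAddCommGroup E]
    [NormedSpace ℝ E] {s K : Set E} {f : E → ℝ} (hf : StrictConvexOn ℝ s f)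
    (hc : ContinuousOn f s) (hK : IsCompact K) (hKs : K ⊆ s) {ε : ℝ} (hε : 0 < ε) :
    ∃ δ > 0, ∀ p ∈ K, ∀ x ∈ K, ε ≤ ‖x - p‖ →
      δ ≤ f p + f x - 2 * f (midpoint ℝ p x) := by
  set far : Set (E × E) := K ×ˢ K ∩ {q | ε ≤ ‖q.2 - q.1‖}
  have hfar : IsCompact far :=
    (hK.prod hK).inter_right (isClosed_le continuous_const (by fun_prop))
  have hmid : MapsTo (fun q : E × E => midpoint ℝ q.1 q.2) far s :=
    fun q hq => hf.1.midpoint_mem (hKs hq.1.1) (hKs hq.1.2)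
  have hgap_cont :
      ContinuousOn (fun q : E × E => f q.1 + f q.2 - 2 * f (midpoint ℝ q.1 q.2)) far :=
    ((hc.comp continuousOn_fst fun q hq => hKs hq.1.1).add
      (hc.comp continuousOn_snd fun q hq => hKs hq.1.2)).sub
      (continuousOn_const.mul (hc.comp (by simp_rw [midpoint_eq_smul_add]; fun_prop) hmid))
  have hgap_pos : ∀ q ∈ far, 0 < f q.1 + f q.2 - 2 * f (midpoint ℝ q.1 q.2) := by
    rintro ⟨p, x⟩ ⟨⟨hp, hx⟩, hpx : ε ≤ ‖x - p‖⟩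
    have hne : p ≠ x := by
      rintro rfl
      simp only [sub_self, norm_zero] at hpx
      linarith
    have := hf.2 (hKs hp) (hKs hx) hne (by norm_num : (0 : ℝ) < 1 / 2)
      (by norm_num : (0 : ℝ) < 1 / 2) (by norm_num)
    rw [midpoint_eq_smul_add, invOf_eq_inv, smul_add]
    simp only [smul_eq_mul] at this
    norm_num at this ⊢
    linarith
  obtain ⟨δ, hδ, hδ_le⟩ := hfar.exists_forall_le' hgap_cont hgap_pos
  exact ⟨δ, hδ, fun p hp x hx hpx => hδ_le (p, x) ⟨⟨hp, hx⟩, hpx⟩⟩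

/-- sections of a strictly convex function shrink to their centers,
uniformly in the center. -/
theorem diam_section_tendsto_zero {n : ℕ}
    (u : EuclideanSpace ℝ (Fin n) → ℝ)
    (hu : StrictConvexOn ℝ (ball 0 2) u) (hc : ContinuousOn u (ball 0 2)) :
    ∀ ε > 0, ∃ r₀ > 0, ∀ r : ℝ, 0 < r → r < r₀ →
      ∀ p ∈ ball (0 : EuclideanSpace ℝ (Fin n)) 1,
        ∀ x ∈ outerSection u r p, ‖x - p‖ < ε := by
  intro ε hε
  obtain ⟨δ, hδ, hgap⟩ := hu.exists_pos_le_midpoint_gap hc (isCompact_closedBall 0 1)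
    (closedBall_subset_ball one_lt_two) hε
  refine ⟨√δ, Real.sqrt_pos.2 hδ, fun r hr hrδ p hp x ⟨hx, hx_sec⟩ => ?_⟩
  by_contra! hfar
  have hr2 : r ^ 2 < δ := (Real.lt_sqrt hr.le).1 hrδ
  have hsup := sSup_inner_subdiff_le_midpoint hu.convexOn hc (ball_subset_ball one_le_two hp)
    (ball_subset_ball one_le_two hx)
  have := hgap p (ball_subset_closedBall hp) x (ball_subset_closedBall hx) hfar
  linarith
end

section
/- Let u be a smooth function on a domain in ℝⁿ with D²u > 0 and det D²u = 1, and set z(x) = (x−p)·(∇u(x)−∇u(p)). Then at every point, the gradient of z with respect to the metric g = D²u satisfies |∇_g z|² = Σ_{i,j} g^{ij} ∂_i z ∂_j z ≥ 4z, where (g^{ij}) is the inverse of D²u. -/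
open Metric Set

/-- The Hessian matrix of `u` at `x`. -/
noncomputable def Hess {n : ℕ} (u : EuclideanSpace ℝ (Fin n) → ℝ)
    (x : EuclideanSpace ℝ (Fin n)) : Matrix (Fin n) (Fin n) ℝ :=
  Matrix.of fun i j =>
    iteratedFDeriv ℝ 2 u x ![EuclideanSpace.single i 1, EuclideanSpace.single j 1]

open InnerProductSpace Matrix in
/-- for a smooth strongly convex solution of `det D²u = 1`, the extrinsic
distance squared `z(x) = (x−p)·(∇u(x)−∇u(p))` satisfies `|∇_g z|² ≥ 4z` with `g = D²u`. -/
theorem gradient_z_lower_bound {n : ℕ} (Ω : Set (EuclideanSpace ℝ (Fin n)))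
    (hΩ : IsOpen Ω) (u : EuclideanSpace ℝ (Fin n) → ℝ)
    (hu : ContDiffOn ℝ (⊤ : ℕ∞) u Ω)
    (hpos : ∀ x ∈ Ω, (Hess u x).PosDef)
    (hdet : ∀ x ∈ Ω, (Hess u x).det = 1)
    (p : EuclideanSpace ℝ (Fin n)) (hp : p ∈ Ω)
    (z : EuclideanSpace ℝ (Fin n) → ℝ)
    (hz : z = fun x => (inner ℝ (x - p) (gradient u x - gradient u p) : ℝ)) :
    ∀ x ∈ Ω, 4 * z x ≤
      ∑ i, ∑ j, (Hess u x)⁻¹ i j *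
        fderiv ℝ z x (EuclideanSpace.single i 1) *
        fderiv ℝ z x (EuclideanSpace.single j 1) := by
  intro x hx
  set H := Hess u x with hH
  set y' : Fin n → ℝ := fun j => (x - p) j with hy'
  set w' : Fin n → ℝ := fun j => (gradient u x - gradient u p) j with hw'
  -- The derivative of z
  have hderiv : ∀ i, fderiv ℝ z x (EuclideanSpace.single i 1) = w' i + (H *ᵥ y') i := by
    have hcd : ContDiffAt ℝ (⊤ : ℕ∞) u x := hu.contDiffAt (hΩ.mem_nhds hx)
    have hfd : ContDiffAt ℝ 1 (fderiv ℝ u) x := hcd.fderiv_right (WithTop.coe_le_coe.mpr le_top)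
    have hdiff : DifferentiableAt ℝ (fderiv ℝ u) x := hfd.differentiableAt one_ne_zero
    set F' := fderiv ℝ (fderiv ℝ u) x with hF'
    have hFd : HasFDerivAt (fderiv ℝ u) F' x := hdiff.hasFDerivAt
    set T := ((toDual ℝ (EuclideanSpace ℝ (Fin n))).symm.toContinuousLinearEquiv :
        (EuclideanSpace ℝ (Fin n) →L[ℝ] ℝ) ≃L[ℝ] EuclideanSpace ℝ (Fin n)).toContinuousLinearMap
        with hT
    have hG : HasFDerivAt (gradient u) (T.comp F') x := by
      have : gradient u = fun y => T (fderiv ℝ u y) := rfl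
      rw [this]
      exact T.hasFDerivAt.comp x hFd
    have hGe : ∀ v w, (inner ℝ (T (F' v)) w : ℝ) = F' v w := by
      intro v w
      exact toDual_symm_apply
    have h1 : HasFDerivAt (fun y : EuclideanSpace ℝ (Fin n) => y - p)
        (ContinuousLinearMap.id ℝ (EuclideanSpace ℝ (Fin n))) x :=
      (hasFDerivAt_id x).sub_const p
    have h2 : HasFDerivAt (fun y => gradient u y - gradient u p) (T.comp F') x :=
      hG.sub_const _
    have hzd : HasFDerivAt z ((fderivInnerCLM ℝ (x - p, gradient u x - gradient u p)).comp
        ((ContinuousLinearMap.id ℝ (EuclideanSpace ℝ (Fin n))).prod (T.comp F'))) x := by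
      rw [hz]; exact h1.inner ℝ h2
    intro i
    rw [hzd.fderiv]
    simp only [ContinuousLinearMap.comp_apply, ContinuousLinearMap.prod_apply,
      ContinuousLinearMap.id_apply, fderivInnerCLM_apply]
    have hGc : ∀ i j, (T (F' (EuclideanSpace.single i 1)) : EuclideanSpace ℝ (Fin n)) j
        = Hess u x i j := by
      intro i j
      have h1 : (T (F' (EuclideanSpace.single i 1)) : EuclideanSpace ℝ (Fin n)) j
          = (inner ℝ (T (F' (EuclideanSpace.single i 1))) (EuclideanSpace.single j 1) : ℝ) := by
        rw [EuclideanSpace.inner_single_right]; simp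
      rw [h1, hGe]
      simp [Hess, iteratedFDeriv_two_apply, hF']
    have h3 : (inner ℝ (x - p) (T (F' (EuclideanSpace.single i 1))) : ℝ)
        = ∑ j, (x - p) j * Hess u x i j := by
      rw [PiLp.inner_apply]
      simp [hGc, RCLike.inner_apply]
      exact Finset.sum_congr rfl fun k _ => mul_comm _ _
    have h4 : (inner ℝ (EuclideanSpace.single i 1) (gradient u x - gradient u p) : ℝ)
        = (gradient u x - gradient u p) i := by
      rw [EuclideanSpace.inner_single_left]; simp
    rw [h3, h4, add_comm]
    congr 1
    simp only [Matrix.mulVec, dotProduct]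
    exact Finset.sum_congr rfl fun k _ => mul_comm _ _
  -- value of z
  have hzx : z x = y' ⬝ᵥ w' := by
    rw [hz]
    simp [PiLp.inner_apply, RCLike.inner_apply, dotProduct, hy', hw']
    exact Finset.sum_congr rfl fun k _ => mul_comm _ _
  -- matrix algebra
  have hposH : H.PosDef := by rw [hH]; exact hpos x hx
  have hdetH : H.det = 1 := by rw [hH]; exact hdet x hx
  clear_value H y' w'
  have hunit : IsUnit H.det := by rw [hdetH]; exact isUnit_one
  have hinv : H⁻¹ * H = 1 := Matrix.nonsing_inv_mul H hunit
  have hKpos : (H⁻¹).PosDef := hposH.inv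
  have hKt : H⁻¹ᵀ = H⁻¹ := by
    have h := hKpos.isHermitian
    rwa [Matrix.IsHermitian, Matrix.conjTranspose_eq_transpose_of_trivial] at h
  have hKb : H⁻¹ *ᵥ (H *ᵥ y') = y' := by
    rw [Matrix.mulVec_mulVec, hinv, Matrix.one_mulVec]
  have cross : ∀ v : Fin n → ℝ, (H *ᵥ y') ⬝ᵥ (H⁻¹ *ᵥ v) = y' ⬝ᵥ v := by
    intro v
    rw [Matrix.dotProduct_mulVec, ← Matrix.mulVec_transpose, hKt, hKb]
  have e1 : (w' + H *ᵥ y') ⬝ᵥ (H⁻¹ *ᵥ (w' + H *ᵥ y'))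
      = w' ⬝ᵥ (H⁻¹ *ᵥ w') + 2 * (y' ⬝ᵥ w') + y' ⬝ᵥ (H *ᵥ y') := by
    rw [Matrix.mulVec_add, dotProduct_add, add_dotProduct,
      add_dotProduct, hKb, cross w',
      dotProduct_comm w' y', dotProduct_comm (H *ᵥ y') y']
    ring
  have e2 : (w' - H *ᵥ y') ⬝ᵥ (H⁻¹ *ᵥ (w' - H *ᵥ y'))
      = w' ⬝ᵥ (H⁻¹ *ᵥ w') - 2 * (y' ⬝ᵥ w') + y' ⬝ᵥ (H *ᵥ y') := by
    rw [Matrix.mulVec_sub, dotProduct_sub, sub_dotProduct,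
      sub_dotProduct, hKb, cross w',
      dotProduct_comm w' y', dotProduct_comm (H *ᵥ y') y']
    ring
  have hnn : 0 ≤ (w' - H *ᵥ y') ⬝ᵥ (H⁻¹ *ᵥ (w' - H *ᵥ y')) := by
    have h := hKpos.posSemidef.dotProduct_mulVec_nonneg (w' - H *ᵥ y')
    simpa using h
  have hsum : ∑ i, ∑ j, H⁻¹ i j *
      fderiv ℝ z x (EuclideanSpace.single i 1) *
      fderiv ℝ z x (EuclideanSpace.single j 1)
      = (w' + H *ᵥ y') ⬝ᵥ (H⁻¹ *ᵥ (w' + H *ᵥ y')) := by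
    simp only [hderiv, dotProduct, Matrix.mulVec, Finset.mul_sum, Pi.add_apply]
    exact Finset.sum_congr rfl fun i _ => Finset.sum_congr rfl fun j _ => by ring
  rw [hzx, hsum, e1]
  rw [e2] at hnn
  linarith
end
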